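/- Let A ∈ ℝ^{n×n} be Metzler and let B ∈ ℝ^{n×m}, C ∈ ℝ^{r×n}, D ∈ ℝ^{r×m} have nonnegative entries, and let γ > 0. Then the following are equivalent: (1) A is Hurwitz and (D − C A⁻¹ B)ᵀ·𝟏 < γ·𝟏 entrywise (this expresses that the L₁-induced input-output gain of ẋ = Ax + Bw, y = Cx + Dw is less than γ, since for such positive systems the induced gain equals the static gain D − CA⁻¹B); (2) there exists p ∈ ℝ^n with p ≥ 0 such that Aᵀp + Cᵀ·𝟏 < 0 and Bᵀp + Dᵀ·𝟏 < γ·𝟏 entrywise. -/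

import Mathlib

open Matrix

/-- A real square matrix is *Metzler* if all its off-diagonal entries are nonnegative. -/
def Matrix.Metzler {n : ℕ} (A : Matrix (Fin n) (Fin n) ℝ) : Prop :=
  ∀ i j, i ≠ j → 0 ≤ A i j

/-- A real square matrix is *Hurwitz* if every (complex) eigenvalue has negative real part. -/
def Matrix.Hurwitz {n : ℕ} (A : Matrix (Fin n) (Fin n) ℝ) : Prop :=
  ∀ μ ∈ spectrum ℂ (A.map (Complex.ofReal)), μ.re < 0

/-- A real square matrix is *Schur stable* if every (complex) eigenvalue lies strictly
inside the unit circle. -/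
def Matrix.SchurStable {n : ℕ} (A : Matrix (Fin n) (Fin n) ℝ) : Prop :=
  ∀ μ ∈ spectrum ℂ (A.map (Complex.ofReal)), ‖μ‖ < 1

/-!
For Metzler `A`, stability is tied to the positivity of `-A⁻¹`.

* A vector `p > 0` with `Aᵀ p < 0` makes `diag(p)⁻¹ Aᵀ diag(p)` strictly diagonally dominant
  with negative diagonal, so by Gershgorin `A` is Hurwitz.
* If `A` is Hurwitz, then for large `s` the nonnegative matrix `1 + s⁻¹ A` has all eigenvalues
  in the open unit disc; by Gelfand's formula its Neumann series converges, and
  `-A⁻¹ = s⁻¹ ∑ₖ (1 + s⁻¹ A)ᵏ ≥ 0`.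

With `E = -Aᵀ⁻¹ ≥ 0` and `w = Cᵀ𝟏` the gain vector is `Dᵀ𝟏 + Bᵀ E w`. The vector
`p = E (w + ε𝟏)` satisfies `Aᵀ p + w = -ε𝟏`, and for small `ε > 0` it keeps the gain
inequality. Conversely `Aᵀ p + w ≤ 0` gives `p ≥ E w`, hence `Bᵀ E w ≤ Bᵀ p`.
-/

open Filter Topology

section Nonneg

variable {m n α : Type*} [Fintype n] [Semiring α] [PartialOrder α] [IsOrderedRing α]

theorem Matrix.mulVec_nonneg {X : Matrix m n α} (hX : ∀ i j, 0 ≤ X i j) {v : n → α}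
    (hv : 0 ≤ v) : 0 ≤ X *ᵥ v :=
  fun i => Finset.sum_nonneg fun j _ => mul_nonneg (hX i j) (hv j)

theorem Matrix.mulVec_mono {X : Matrix m n α} (hX : ∀ i j, 0 ≤ X i j) {v w : n → α}
    (h : v ≤ w) : X *ᵥ v ≤ X *ᵥ w :=
  fun i => Finset.sum_le_sum fun j _ => mul_le_mul_of_nonneg_left (h j) (hX i j)

end Nonneg

theorem exists_pos_forall_add_mul_lt {ι : Type*} [Finite ι] {g u : ι → ℝ} {γ : ℝ}
    (h : ∀ i, g i < γ) : ∃ ε > 0, ∀ i, g i + ε * u i < γ := by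
  have hnear : ∀ᶠ ε in 𝓝 (0 : ℝ), ∀ i, g i + ε * u i < γ :=
    eventually_all.2 fun i => ContinuousAt.eventually_lt (f := fun ε => g i + ε * u i)
      (by fun_prop) continuousAt_const (by simpa using h i)
  exact ((hnear.filter_mono (nhdsWithin_le_nhds (s := Set.Ioi 0))).and
    self_mem_nhdsWithin).exists.imp fun ε ⟨hε, hpos⟩ => ⟨hpos, hε⟩

theorem Complex.eventually_norm_ofReal_add_lt {μ : ℂ} (hμ : μ.re < 0) :
    ∀ᶠ s : ℝ in atTop, ‖(s : ℂ) + μ‖ < s := by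
  -- `‖s + μ‖² = s² + 2 s μ.re + ‖μ‖²`
  filter_upwards [eventually_gt_atTop (‖μ‖ ^ 2 / (-2 * μ.re)), eventually_gt_atTop 0]
    with s hs hs0
  rw [div_lt_iff₀ (by linarith)] at hs
  refine lt_of_pow_lt_pow_left₀ 2 hs0.le ?_
  have hμ2 : ‖μ‖ ^ 2 = μ.re ^ 2 + μ.im ^ 2 := by
    rw [Complex.sq_norm, Complex.normSq_apply]; ring
  rw [Complex.sq_norm, Complex.normSq_apply]
  simp only [Complex.add_re, Complex.add_im, Complex.ofReal_re, Complex.ofReal_im]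
  nlinarith

section SpectralRadius

variable {𝔸 : Type*} [NormedRing 𝔸] [NormedAlgebra ℂ 𝔸] [CompleteSpace 𝔸]

theorem summable_norm_pow_of_spectralRadius_lt_one {a : 𝔸} (h : spectralRadius ℂ a < 1) :
    Summable fun k => ‖a ^ k‖ := by
  obtain ⟨r, hρr, hr1⟩ := ENNReal.lt_iff_exists_nnreal_btwn.1 h
  refine .of_norm_bounded_eventually_nat (g := fun k => (r : ℝ) ^ k)
    (summable_geometric_of_lt_one r.2 (by exact_mod_cast hr1)) ?_
  filter_upwards [(spectrum.pow_norm_pow_one_div_tendsto_nhds_spectralRadius a).eventually_lt_const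
    hρr, eventually_gt_atTop 0] with k hk hk0
  rw [ENNReal.ofReal_lt_iff_lt_toReal (by positivity) ENNReal.coe_ne_top, ENNReal.coe_toReal,
    one_div] at hk
  have hk' := (Real.rpow_inv_lt_iff_of_pos (norm_nonneg _) r.2 (Nat.cast_pos.2 hk0)).1 hk
  rw [Real.rpow_natCast] at hk'
  exact (norm_norm _).trans_le hk'.le

theorem summable_norm_pow_of_forall_norm_lt_one {a : 𝔸} (h : ∀ z ∈ spectrum ℂ a, ‖z‖ < 1) :
    Summable fun k => ‖a ^ k‖ := by
  cases subsingleton_or_nontrivial 𝔸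
  · exact summable_zero.congr fun k => by simp [Subsingleton.elim (a ^ k) 0]
  · refine summable_norm_pow_of_spectralRadius_lt_one ?_
    exact_mod_cast spectrum.spectralRadius_lt_of_forall_lt a (r := 1) (by exact_mod_cast h)

end SpectralRadius

namespace Matrix

section Spectrum

variable {ι : Type*} [Fintype ι] [DecidableEq ι]

theorem spectrum_transpose {R : Type*} [CommRing R] (M : Matrix ι ι R) :
    spectrum R Mᵀ = spectrum R M := by
  ext μ
  have h : algebraMap R _ μ - Mᵀ = (algebraMap R _ μ - M)ᵀ := by
    rw [transpose_sub, algebraMap_eq_diagonal, diagonal_transpose]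
  rw [spectrum.mem_iff, spectrum.mem_iff, isUnit_iff_isUnit_det, isUnit_iff_isUnit_det, h,
    det_transpose]

theorem spectrum_map_ofReal_conj (A : Matrix ι ι ℝ) {P Q : Matrix ι ι ℝ} (hPQ : P * Q = 1)
    (hQP : Q * P = 1) :
    spectrum ℂ ((Q * A * P).map Complex.ofReal) = spectrum ℂ (A.map Complex.ofReal) := by
  let f : Matrix ι ι ℝ →+* Matrix ι ι ℂ := Complex.ofRealHom.mapMatrix
  change spectrum ℂ (f (Q * A * P)) = spectrum ℂ (f A)
  rw [map_mul, map_mul]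
  exact spectrum.units_conjugate' (u := Units.map f.toMonoidHom ⟨P, Q, hPQ, hQP⟩)

theorem re_lt_zero_of_mem_spectrum {M : Matrix ι ι ℂ}
    (hM : ∀ k, (M k k).re + ∑ j ∈ Finset.univ.erase k, ‖M k j‖ < 0)
    {μ : ℂ} (hμ : μ ∈ spectrum ℂ M) : μ.re < 0 := by
  rw [← spectrum_toLin', ← Module.End.hasEigenvalue_iff_mem_spectrum] at hμ
  obtain ⟨k, hk⟩ := eigenvalue_mem_ball hμ
  rw [Metric.mem_closedBall, dist_eq_norm] at hk
  have := (Complex.re_le_norm (μ - M k k)).trans hk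
  rw [Complex.sub_re] at this
  linarith [hM k]

end Spectrum

variable {n : ℕ} {A : Matrix (Fin n) (Fin n) ℝ}

theorem Metzler.transpose (hA : A.Metzler) : Aᵀ.Metzler :=
  fun i j hij => hA j i hij.symm

theorem hurwitz_transpose_iff : Aᵀ.Hurwitz ↔ A.Hurwitz := by
  rw [Hurwitz, Hurwitz, transpose_map, spectrum_transpose]

theorem Metzler.pos_of_mulVec_neg (hA : A.Metzler) {p : Fin n → ℝ} (hp : 0 ≤ p)
    (hAp : ∀ i, (A *ᵥ p) i < 0) (i : Fin n) : 0 < p i := by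
  refine (hp i).lt_of_ne fun hpi => (hAp i).not_ge ?_
  change 0 ≤ ∑ j, A i j * p j
  refine Finset.sum_nonneg fun j _ => ?_
  rcases eq_or_ne i j with rfl | hij
  · simp [← hpi]
  · exact mul_nonneg (hA i j hij) (hp j)

theorem Metzler.hurwitz_of_mulVec_neg (hA : A.Metzler) {p : Fin n → ℝ} (hp : ∀ i, 0 < p i)
    (hAp : ∀ i, (A *ᵥ p) i < 0) : A.Hurwitz := by
  have hpp : ∀ i, p i * (p i)⁻¹ = 1 := fun i => mul_inv_cancel₀ (hp i).ne'
  intro μ hμ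
  rw [← spectrum_map_ofReal_conj A (P := diagonal p) (Q := diagonal p⁻¹) (by simp [hpp])
    (by simp [hpp, mul_comm])] at hμ
  refine re_lt_zero_of_mem_spectrum (fun k => ?_) hμ
  have hentry : ∀ j, (diagonal p⁻¹ * A * diagonal p).map Complex.ofReal k j =
      ((p k)⁻¹ * A k j * p j : ℝ) := fun j => by
    simp [mul_diagonal, diagonal_mul]
  calc _ = A k k + ∑ j ∈ Finset.univ.erase k, (p k)⁻¹ * A k j * p j := by
        simp only [hentry, Complex.ofReal_re, Complex.norm_real, Real.norm_eq_abs]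
        congr 1
        · field_simp [(hp k).ne']
        · refine Finset.sum_congr rfl fun j hj => abs_of_nonneg ?_
          exact mul_nonneg (mul_nonneg (inv_nonneg.2 (hp k).le)
            (hA k j (Finset.ne_of_mem_erase hj).symm)) (hp j).le
    _ = (p k)⁻¹ * (A *ᵥ p) k := by
        rw [mulVec, dotProduct, ← Finset.add_sum_erase _ _ (Finset.mem_univ k), mul_add,
          Finset.mul_sum]
        field_simp [(hp k).ne']
    _ < 0 := mul_neg_of_pos_of_neg (inv_pos.2 (hp k)) (hAp k)

theorem Metzler.hurwitz_of_mulVec_add_neg (hA : A.Metzler) {p w : Fin n → ℝ} (hp : 0 ≤ p)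
    (hw : 0 ≤ w) (h : ∀ i, (A *ᵥ p + w) i < 0) : A.Hurwitz := by
  have hAp : ∀ i, (A *ᵥ p) i < 0 := fun i => by
    have hi : (A *ᵥ p) i + w i < 0 := h i
    linarith [show 0 ≤ w i from hw i]
  exact hA.hurwitz_of_mulVec_neg (hA.pos_of_mulVec_neg hp hAp) hAp

theorem SchurStable.summable_pow (hA : A.SchurStable) : Summable (A ^ ·) := by
  let _ := Matrix.linftyOpNormedRing (n := Fin n) (α := ℂ)
  let _ := Matrix.linftyOpNormedAlgebra (R := ℂ) (n := Fin n) (α := ℂ)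
  have hC : Summable (A.map Complex.ofReal ^ ·) :=
    .of_norm (summable_norm_pow_of_forall_norm_lt_one hA)
  have hre := hC.map (Complex.reAddGroupHom.mapMatrix : Matrix _ _ ℂ →+ Matrix _ _ ℝ)
    (continuous_id.matrix_map Complex.continuous_re)
  convert hre using 2 with k
  have hpow : A.map Complex.ofReal ^ k = (A ^ k).map Complex.ofReal :=
    (map_pow Complex.ofRealHom.mapMatrix A k).symm
  ext i j
  simp [hpow]

theorem schurStable_one_add_inv_smul {s : ℝ} (hs : 0 < s)
    (h : ∀ μ ∈ spectrum ℂ (A.map Complex.ofReal), ‖(s : ℂ) + μ‖ < s) :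
    (1 + s⁻¹ • A).SchurStable := by
  have hs' : (s : ℂ) ≠ 0 := by exact_mod_cast hs.ne'
  let u : ℂˣ := Units.mk0 (s : ℂ)⁻¹ (inv_ne_zero hs')
  have hmap : (1 + s⁻¹ • A).map Complex.ofReal =
      algebraMap ℂ (Matrix (Fin n) (Fin n) ℂ) 1 + u • A.map Complex.ofReal := by
    ext i j
    simp [u, one_apply, apply_ite]
  intro z hz
  rw [hmap, ← spectrum.singleton_add_eq, spectrum.unit_smul_eq_smul] at hz
  obtain ⟨_, rfl, _, ⟨μ, hμ, rfl⟩, rfl⟩ := hz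
  have hz : (1 : ℂ) + (u : ℂ) • μ = (s : ℂ)⁻¹ * (s + μ) := by
    simp only [u, Units.val_mk0, smul_eq_mul]
    field_simp
  change ‖(1 : ℂ) + (u : ℂ) • μ‖ < 1
  rw [hz, norm_mul, norm_inv, Complex.norm_real, Real.norm_of_nonneg hs.le,
    inv_mul_lt_one₀ hs]
  exact h μ hμ

theorem Hurwitz.eventually_norm_add_lt (hH : A.Hurwitz) :
    ∀ᶠ s : ℝ in atTop, ∀ μ ∈ spectrum ℂ (A.map Complex.ofReal), ‖(s : ℂ) + μ‖ < s :=
  (eventually_all_finite (finite_spectrum _)).2 fun μ hμ =>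
    Complex.eventually_norm_ofReal_add_lt (hH μ hμ)

theorem Metzler.exists_mul_eq_one_nonpos (hA : A.Metzler) (hH : A.Hurwitz) :
    ∃ X, A * X = 1 ∧ ∀ i j, X i j ≤ 0 := by
  obtain ⟨s, hspec, hs, hdiag⟩ := (hH.eventually_norm_add_lt.and ((eventually_gt_atTop 0).and
    (eventually_all.2 fun i => eventually_ge_atTop (-A i i)))).exists
  set a := 1 + s⁻¹ • A
  have ha : ∀ i j, 0 ≤ a i j := by
    intro i j
    rcases eq_or_ne i j with rfl | hij
    · have : -1 ≤ s⁻¹ * A i i := by rw [inv_mul_eq_div, le_div_iff₀ hs]; linarith [hdiag i]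
      simp only [a, add_apply, one_apply_eq, smul_apply, smul_eq_mul]
      linarith
    · simpa [a, one_apply_ne hij] using mul_nonneg (inv_nonneg.2 hs.le) (hA i j hij)
  have hsum := (schurStable_one_add_inv_smul hs hspec).summable_pow
  refine ⟨-s⁻¹ • ∑' k, a ^ k, ?_, fun i j => ?_⟩
  · have hA' : A = -s • (1 - a) := by simp [a, smul_smul, hs.ne']
    rw [hA', smul_mul_smul_comm, hsum.one_sub_mul_tsum_pow]
    simp [hs.ne']
  · have hT : 0 ≤ (∑' k, a ^ k) i j :=
      (Pi.hasSum.1 (Pi.hasSum.1 hsum.hasSum i) j).nonneg fun k => pow_apply_nonneg ha k i j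
    simpa using mul_nonneg (inv_nonneg.2 hs.le) hT

theorem Metzler.isUnit_det_of_hurwitz (hA : A.Metzler) (hH : A.Hurwitz) : IsUnit A.det :=
  have ⟨_, hX, _⟩ := hA.exists_mul_eq_one_nonpos hH
  isUnit_det_of_right_inverse hX

theorem Metzler.neg_inv_nonneg_of_hurwitz (hA : A.Metzler) (hH : A.Hurwitz) (i j : Fin n) :
    0 ≤ (-A⁻¹) i j := by
  obtain ⟨X, hX, hX_nonpos⟩ := hA.exists_mul_eq_one_nonpos hH
  rw [inv_eq_right_inv hX]
  exact neg_nonneg.2 (hX_nonpos i j)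

theorem transpose_sub_mul_inv_mul_mulVec {ι κ μ R : Type*} [Fintype ι] [DecidableEq ι]
    [Fintype κ] [Fintype μ] [CommRing R] (A : Matrix ι ι R) (B : Matrix ι μ R)
    (C : Matrix κ ι R) (D : Matrix κ μ R) (v : κ → R) :
    (D - C * A⁻¹ * B)ᵀ *ᵥ v = Dᵀ *ᵥ v + Bᵀ *ᵥ ((-Aᵀ⁻¹) *ᵥ (Cᵀ *ᵥ v)) := by
  rw [transpose_sub, sub_mulVec, transpose_mul, transpose_mul, transpose_nonsing_inv,
    ← mulVec_mulVec, ← mulVec_mulVec, neg_mulVec, mulVec_neg, sub_eq_add_neg]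

end Matrix

section NegInvNonneg

variable {ι κ : Type*} [Fintype ι] [DecidableEq ι] {M : Matrix ι ι ℝ} {w : ι → ℝ}

theorem exists_nonneg_mulVec_add_neg_of_neg_inv_nonneg [Fintype κ] {N : Matrix κ ι ℝ}
    (hM : IsUnit M.det) (hE : ∀ i j, 0 ≤ (-M⁻¹) i j) (hw : 0 ≤ w) {d : κ → ℝ} {γ : ℝ}
    (h : ∀ k, (d + N *ᵥ ((-M⁻¹) *ᵥ w)) k < γ) :
    ∃ p, 0 ≤ p ∧ (∀ i, (M *ᵥ p + w) i < 0) ∧ ∀ k, (N *ᵥ p + d) k < γ := by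
  obtain ⟨ε, hε, hεγ⟩ := exists_pos_forall_add_mul_lt (u := N *ᵥ ((-M⁻¹) *ᵥ 1)) h
  refine ⟨(-M⁻¹) *ᵥ (w + ε • 1), mulVec_nonneg hE (add_nonneg hw (smul_nonneg hε.le zero_le_one)),
    fun i => ?_, fun k => ?_⟩
  · have hMp : M *ᵥ ((-M⁻¹) *ᵥ (w + ε • 1)) = -(w + ε • 1) := by
      rw [mulVec_mulVec, mul_neg, mul_nonsing_inv _ hM, neg_mulVec, one_mulVec]
    simp [hMp, hε]
  · have hNp : N *ᵥ ((-M⁻¹) *ᵥ (w + ε • 1)) =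
        N *ᵥ ((-M⁻¹) *ᵥ w) + ε • N *ᵥ ((-M⁻¹) *ᵥ 1) := by
      rw [mulVec_add, mulVec_add, mulVec_smul, mulVec_smul]
    have := hεγ k
    simp only [hNp, Pi.add_apply, Pi.smul_apply, smul_eq_mul] at this ⊢
    linarith

theorem neg_inv_mulVec_le_of_mulVec_add_nonpos (hM : IsUnit M.det)
    (hE : ∀ i j, 0 ≤ (-M⁻¹) i j) {p : ι → ℝ} (h : M *ᵥ p + w ≤ 0) : (-M⁻¹) *ᵥ w ≤ p := by
  have hq := mulVec_nonneg hE (neg_nonneg.2 h)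
  rwa [neg_mulVec, mulVec_neg, neg_neg, mulVec_add, mulVec_mulVec, nonsing_inv_mul _ hM,
    one_mulVec, ← sub_neg_eq_add, ← neg_mulVec, sub_nonneg] at hq

end NegInvNonneg

theorem positive_system_l1_gain_iff_general {n m r : ℕ}
    (A : Matrix (Fin n) (Fin n) ℝ) (B : Matrix (Fin n) (Fin m) ℝ)
    (C : Matrix (Fin r) (Fin n) ℝ) (D : Matrix (Fin r) (Fin m) ℝ)
    (hA : A.Metzler) (hB : ∀ i j, 0 ≤ B i j) (hC : ∀ i j, 0 ≤ C i j)
    (γ : ℝ) :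
    (A.Hurwitz ∧ ∀ i, ((D - C * A⁻¹ * B)ᵀ *ᵥ fun _ => (1 : ℝ)) i < γ) ↔
    (∃ p : Fin n → ℝ, (∀ i, 0 ≤ p i) ∧
      (∀ i, (Aᵀ *ᵥ p + Cᵀ *ᵥ fun _ => (1 : ℝ)) i < 0) ∧
      (∀ i, (Bᵀ *ᵥ p + Dᵀ *ᵥ fun _ => (1 : ℝ)) i < γ)) := by
  have hAT : Aᵀ.Metzler := hA.transpose
  have hw : 0 ≤ Cᵀ *ᵥ fun _ => (1 : ℝ) := mulVec_nonneg (fun i j => hC j i) fun _ => zero_le_one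
  rw [transpose_sub_mul_inv_mul_mulVec]
  constructor
  · rintro ⟨hH, hgain⟩
    have hHT : Aᵀ.Hurwitz := hurwitz_transpose_iff.2 hH
    exact exists_nonneg_mulVec_add_neg_of_neg_inv_nonneg (hAT.isUnit_det_of_hurwitz hHT)
      (hAT.neg_inv_nonneg_of_hurwitz hHT) hw hgain
  · rintro ⟨p, hp, hAp, hBp⟩
    have hHT : Aᵀ.Hurwitz := hAT.hurwitz_of_mulVec_add_neg hp hw hAp
    refine ⟨hurwitz_transpose_iff.1 hHT, fun i => ?_⟩
    have hle := neg_inv_mulVec_le_of_mulVec_add_nonpos (hAT.isUnit_det_of_hurwitz hHT)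
      (hAT.neg_inv_nonneg_of_hurwitz hHT) fun i => (hAp i).le
    calc _ ≤ (Dᵀ *ᵥ (fun _ => (1 : ℝ)) + Bᵀ *ᵥ p) i :=
          add_le_add le_rfl (mulVec_mono (X := Bᵀ) (fun i j => hB j i) hle i)
      _ < γ := by rw [add_comm]; exact hBp i

/-- `L₁`-induced performance of a positive system: for Metzler `A` and nonnegative
`B, C, D`, the matrix `A` is Hurwitz with `(D - C A⁻¹ B)ᵀ 𝟏 < γ 𝟏` (equivalently,
`L₁`-induced gain less than `γ`) iff there is `p ≥ 0` with `Aᵀp + Cᵀ𝟏 < 0` and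
`Bᵀp + Dᵀ𝟏 < γ𝟏` entrywise. -/
theorem positive_system_l1_gain_iff {n m r : ℕ}
    (A : Matrix (Fin n) (Fin n) ℝ) (B : Matrix (Fin n) (Fin m) ℝ)
    (C : Matrix (Fin r) (Fin n) ℝ) (D : Matrix (Fin r) (Fin m) ℝ)
    (hA : A.Metzler) (hB : ∀ i j, 0 ≤ B i j) (hC : ∀ i j, 0 ≤ C i j)
    (hD : ∀ i j, 0 ≤ D i j) (γ : ℝ) (hγ : 0 < γ) :
    (A.Hurwitz ∧ ∀ i, ((D - C * A⁻¹ * B)ᵀ *ᵥ fun _ => (1 : ℝ)) i < γ) ↔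
    (∃ p : Fin n → ℝ, (∀ i, 0 ≤ p i) ∧
      (∀ i, (Aᵀ *ᵥ p + Cᵀ *ᵥ fun _ => (1 : ℝ)) i < 0) ∧
      (∀ i, (Bᵀ *ᵥ p + Dᵀ *ᵥ fun _ => (1 : ℝ)) i < γ)) :=
  positive_system_l1_gain_iff_general A B C D hA hB hC γ
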